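/- arXiv:1607.08700 — 3 statements merged into one kernel-verified Lean document; each statement's English description precedes it below -/
import Mathlib

section
/- For every function f in the class ℱ, the first logarithmic coefficient satisfies |γ₁| ≤ 1/2. -/
open Complex Metric

/-- The `n`-th logarithmic coefficient `γₙ` of `f`, computed from an analytic branch `h`
of `log (f z / z)` with `h 0 = 0`: it is half the `n`-th Taylor coefficient of `h` at `0`. -/
noncomputable def logCoeff (h : ℂ → ℂ) (n : ℕ) : ℂ :=
  iteratedDeriv n h 0 / (2 * (n.factorial : ℂ))

/-- `g` is an odd starlike function on the unit disk. -/
def IsOddStarlike (g : ℂ → ℂ) : Prop :=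
  AnalyticOnNhd ℂ g (ball (0:ℂ) 1) ∧ g 0 = 0 ∧ deriv g 0 = 1 ∧
    (∀ z ∈ ball (0:ℂ) 1, z ≠ 0 → 0 < (z * deriv g z / g z).re) ∧
    (∀ z ∈ ball (0:ℂ) 1, g (-z) = -g z)

/-- `f` belongs to the class ℱ of close-to-convex functions with argument `0`
with respect to odd starlike functions. -/
def MemClassF (f : ℂ → ℂ) : Prop :=
  AnalyticOnNhd ℂ f (ball (0:ℂ) 1) ∧ f 0 = 0 ∧ deriv f 0 = 1 ∧
    ∃ g : ℂ → ℂ, IsOddStarlike g ∧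
      ∀ z ∈ ball (0:ℂ) 1, z ≠ 0 → 0 < (z * deriv f z / g z).re

/-- `h` is an analytic branch of `log (f z / z)` on the unit disk with `h 0 = 0`. -/
def IsLogBranch (f h : ℂ → ℂ) : Prop :=
  AnalyticOnNhd ℂ h (ball (0:ℂ) 1) ∧ h 0 = 0 ∧
    ∀ z ∈ ball (0:ℂ) 1, z ≠ 0 → Complex.exp (h z) = f z / z

/-!
With `G z = g z / z` (even, since `g` is odd, so `G'(0) = 0`), the function `q = f' / G` is
analytic with `q 0 = 1` and positive real part, hence `|q'(0)| ≤ 2` by Carathéodory's lemma.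
But `q'(0) = f''(0) = 2 a₂`, and `f z / z = exp (h z)` gives `2 γ₁ = h'(0) = a₂`.
-/

open Filter Topology Set

section

variable {𝕜 E : Type*} [NontriviallyNormedField 𝕜] [NormedAddCommGroup E] [NormedSpace 𝕜 E]

theorem AnalyticAt.dslope {f : 𝕜 → E} {a z : 𝕜} (hf : AnalyticAt 𝕜 f z) :
    AnalyticAt 𝕜 (dslope f a) z := by
  rcases eq_or_ne z a with rfl | hza
  · obtain ⟨p, hp⟩ := hf
    exact ⟨p.fslope, hp.has_fpower_series_dslope_fslope⟩
  · have hslope : AnalyticAt 𝕜 (fun w => (w - a)⁻¹ • (f w - f a)) z :=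
      ((analyticAt_id.sub analyticAt_const).inv (sub_ne_zero.2 hza)).smul
        (hf.sub analyticAt_const)
    exact hslope.congr (dslope_eventuallyEq_slope_of_ne f hza).symm

theorem AnalyticOnNhd.dslope {f : 𝕜 → E} {s : Set 𝕜} (hf : AnalyticOnNhd 𝕜 f s) (a : 𝕜) :
    AnalyticOnNhd 𝕜 (dslope f a) s :=
  fun z hz => (hf z hz).dslope

theorem deriv_eq_zero_of_eventually_even [CharZero 𝕜] {f : 𝕜 → 𝕜}
    (hf : (fun z => f (-z)) =ᶠ[𝓝 0] f) : deriv f 0 = 0 := by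
  have h := hf.deriv_eq
  rw [deriv_comp_neg, neg_zero] at h
  exact self_eq_neg.mp h.symm

theorem eventually_dslope_neg_of_odd [CharZero 𝕜] {g : 𝕜 → 𝕜}
    (hg : ∀ᶠ z in 𝓝 0, g (-z) = -g z) : ∀ᶠ z in 𝓝 0, dslope g 0 (-z) = dslope g 0 z := by
  have hg0 : g 0 = 0 := self_eq_neg.mp (by simpa using hg.self_of_nhds)
  filter_upwards [hg] with z hz
  rcases eq_or_ne z 0 with rfl | hz0
  · simp
  · rw [dslope_of_ne _ hz0, dslope_of_ne _ (neg_ne_zero.2 hz0), slope_def_field,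
      slope_def_field, hz, hg0]
    ring

theorem deriv_deriv_eq_two_mul_deriv_dslope [CompleteSpace 𝕜] {f : 𝕜 → 𝕜}
    (hf : AnalyticAt 𝕜 f 0) : deriv (deriv f) 0 = 2 * deriv (dslope f 0) 0 := by
  set F := dslope f 0
  have hF : AnalyticAt 𝕜 F 0 := hf.dslope
  have hfF : f = fun w => f 0 + w * F w := by
    ext w
    have := sub_smul_dslope f 0 w
    rw [sub_zero, smul_eq_mul] at this
    rw [this]; ring
  have hderiv : deriv f =ᶠ[𝓝 0] fun z => F z + z * deriv F z := by
    filter_upwards [hF.eventually_analyticAt] with z hz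
    have : HasDerivAt (fun w => f 0 + w * F w) (1 * F z + z * deriv F z) z :=
      ((hasDerivAt_id z).mul hz.differentiableAt.hasDerivAt).const_add _
    rw [hfF, this.deriv, one_mul]
  have : HasDerivAt (fun z => F z + z * deriv F z)
      (deriv F 0 + (1 * deriv F 0 + 0 * deriv (deriv F) 0)) 0 :=
    hF.differentiableAt.hasDerivAt.add
      ((hasDerivAt_id 0).mul hF.deriv.differentiableAt.hasDerivAt)
  rw [hderiv.deriv_eq, this.deriv]
  ring

end

theorem Complex.norm_sub_one_lt_norm_add_one {z : ℂ} (hz : 0 < z.re) : ‖z - 1‖ < ‖z + 1‖ := by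
  have : normSq (z - 1) < normSq (z + 1) := by
    rw [normSq_sub, normSq_add]
    simp only [map_one, mul_one]
    linarith
  rw [← sq_lt_sq₀ (norm_nonneg _) (norm_nonneg _), ← normSq_eq_norm_sq, ← normSq_eq_norm_sq]
  exact this

/-- Carathéodory's lemma, deduced from the Schwarz lemma applied to the Cayley transform
`(p - 1) / (p + 1)` of `p`. -/
theorem Complex.norm_deriv_le_two_div_of_re_pos {p : ℂ → ℂ} {c : ℂ} {R : ℝ}
    (hp : DifferentiableOn ℂ p (ball c R)) (hpc : p c = 1) (hre : ∀ z ∈ ball c R, 0 < (p z).re)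
    (hR : 0 < R) : ‖deriv p c‖ ≤ 2 / R := by
  have hne : ∀ z ∈ ball c R, p z + 1 ≠ 0 := fun z hz h => by
    have := congrArg re h
    simp only [add_re, one_re, zero_re] at this
    linarith [hre z hz]
  set w := fun z => (p z - 1) / (p z + 1)
  have hw : DifferentiableOn ℂ w (ball c R) :=
    (hp.sub_const 1).div (hp.add_const 1) hne
  have hmaps : MapsTo w (ball c R) (closedBall (w c) 1) := by
    intro z hz
    have hlt := norm_sub_one_lt_norm_add_one (hre z hz)
    simp only [w, hpc, sub_self, zero_div, mem_closedBall_zero_iff, norm_div]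
    exact (div_lt_one (hlt.trans_le' (norm_nonneg _))).2 hlt |>.le
  have hcR : c ∈ ball c R := mem_ball_self hR
  have hpd := hp.differentiableAt (isOpen_ball.mem_nhds hcR)
  have hwc : deriv w c = deriv p c / 2 := by
    rw [deriv_fun_div (hpd.sub_const 1) (hpd.add_const 1) (hne c hcR), deriv_sub_const,
      deriv_add_const, hpc]
    ring
  have := norm_deriv_le_div_of_mapsTo_ball hw hmaps hR
  rw [hwc, norm_div, RCLike.norm_ofNat] at this
  linarith [show 2 / R = 2 * (1 / R) by ring]

namespace IsOddStarlike

variable {g : ℂ → ℂ} (hg : IsOddStarlike g)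
include hg

theorem dslope_eq_div {z : ℂ} (hz : z ≠ 0) : dslope g 0 z = g z / z := by
  rw [dslope_of_ne _ hz, slope_def_field, hg.2.1, sub_zero, sub_zero]

theorem dslope_zero : dslope g 0 0 = 1 := by
  rw [dslope_same, hg.2.2.1]

theorem dslope_ne_zero {z : ℂ} (hz : z ∈ ball (0:ℂ) 1) : dslope g 0 z ≠ 0 := by
  rcases eq_or_ne z 0 with rfl | hz0
  · rw [hg.dslope_zero]; exact one_ne_zero
  · have hgz : g z ≠ 0 := fun h0 => by
      simpa [h0] using hg.2.2.2.1 z hz hz0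
    rw [hg.dslope_eq_div hz0]
    exact div_ne_zero hgz hz0

theorem deriv_dslope_zero : deriv (dslope g 0) 0 = 0 := by
  refine deriv_eq_zero_of_eventually_even (eventually_dslope_neg_of_odd ?_)
  filter_upwards [ball_mem_nhds (0:ℂ) one_pos] using hg.2.2.2.2

end IsOddStarlike

theorem MemClassF.norm_deriv_deriv_le_two {f : ℂ → ℂ} (hf : MemClassF f) :
    ‖deriv (deriv f) 0‖ ≤ 2 := by
  obtain ⟨hfa, -, hf1, g, hg, hfg⟩ := hf
  have h0 : (0:ℂ) ∈ ball (0:ℂ) 1 := mem_ball_self one_pos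
  set q := fun z => deriv f z / dslope g 0 z
  have hqa : DifferentiableOn ℂ q (ball 0 1) :=
    hfa.deriv.differentiableOn.div (hg.1.dslope 0).differentiableOn fun z hz =>
      hg.dslope_ne_zero hz
  have hq0 : q 0 = 1 := by simp only [q, hf1, hg.dslope_zero, div_one]
  have hqre : ∀ z ∈ ball (0:ℂ) 1, 0 < (q z).re := by
    intro z hz
    rcases eq_or_ne z 0 with rfl | hz0
    · simp [hq0]
    · convert hfg z hz hz0 using 2
      simp only [q, hg.dslope_eq_div hz0]
      field_simp
  have hq' : deriv q 0 = deriv (deriv f) 0 := by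
    rw [deriv_fun_div (hfa.deriv 0 h0).differentiableAt (hg.1.dslope 0 0 h0).differentiableAt
      (hg.dslope_ne_zero h0), hg.dslope_zero, hg.deriv_dslope_zero, hf1]
    simp
  simpa [hq'] using norm_deriv_le_two_div_of_re_pos hqa hq0 hqre one_pos

theorem IsLogBranch.deriv_dslope_eq {f h : ℂ → ℂ} (hh : IsLogBranch f h) (hf0 : f 0 = 0)
    (hf1 : deriv f 0 = 1) : deriv (dslope f 0) 0 = deriv h 0 := by
  obtain ⟨hha, hh0, hexp⟩ := hh
  have h0 : (0:ℂ) ∈ ball (0:ℂ) 1 := mem_ball_self one_pos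
  have heq : dslope f 0 =ᶠ[𝓝 0] fun z => exp (h z) := by
    filter_upwards [ball_mem_nhds (0:ℂ) one_pos] with z hz
    rcases eq_or_ne z 0 with rfl | hz0
    · rw [dslope_same, hf1, hh0, exp_zero]
    · rw [dslope_of_ne _ hz0, slope_def_field, hf0, hexp z hz hz0, sub_zero, sub_zero]
  rw [heq.deriv_eq, ((hha 0 h0).differentiableAt.hasDerivAt.cexp).deriv, hh0, exp_zero, one_mul]

theorem logCoeff_one (h : ℂ → ℂ) : logCoeff h 1 = deriv h 0 / 2 := by
  simp [logCoeff]

/-- For every `f ∈ ℱ`, the first logarithmic coefficient satisfies `|γ₁| ≤ 1/2`. -/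
theorem abs_gamma_one_le (f h : ℂ → ℂ) (hf : MemClassF f) (hh : IsLogBranch f h) :
    ‖logCoeff h 1‖ ≤ 1 / 2 := by
  have ha₂ := hf.norm_deriv_deriv_le_two
  obtain ⟨hfa, hf0, hf1, -⟩ := hf
  rw [deriv_deriv_eq_two_mul_deriv_dslope (hfa 0 (mem_ball_self one_pos)),
    hh.deriv_dslope_eq hf0 hf1, norm_mul, RCLike.norm_ofNat] at ha₂
  rw [logCoeff_one, norm_div, RCLike.norm_ofNat]
  linarith
end

section
/- The bound |γ₁| ≤ 1/2 on the class ℱ is sharp: the function f analytic on 𝔻 determined by f(0) = 0 and z f'(z) = g(z)·P(z), where g(z) = z/(1 − z²) and P(z) = (1 + z)/(1 − z), belongs to ℱ and satisfies |γ₁| = 1/2. -/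
open Complex Metric

open Filter Topology

/-! The equation forces `f' = (1 - z)⁻²` on the disk (at `0` by continuity), hence `f = z / (1 - z)`
and `exp ∘ h = (1 - z)⁻¹`, so `h' 0 = 1` and `γ₁ = 1/2`. The odd starlike witness is
`g = z / (1 - z²)`, with `z g' / g = (1 + z²) / (1 - z²)`, and then `z f' / g = (1 + z) / (1 - z)`:
both are Cayley transforms of points of the disk, hence lie in the right half-plane. -/

lemma one_sub_ne_zero_of_norm_lt_one {R : Type*} [NormedRing R] [NormOneClass R] {x : R}
    (hx : ‖x‖ < 1) : 1 - x ≠ 0 := by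
  rw [sub_ne_zero]
  rintro rfl
  simp at hx

lemma one_sub_sq_ne_zero_of_norm_lt_one {z : ℂ} (hz : ‖z‖ < 1) : 1 - z ^ 2 ≠ 0 :=
  one_sub_ne_zero_of_norm_lt_one (by simpa using pow_lt_one₀ (norm_nonneg z) hz two_ne_zero)

lemma re_one_add_div_one_sub_pos {w : ℂ} (hw : ‖w‖ < 1) : 0 < ((1 + w) / (1 - w)).re := by
  have hre : ((1 + w) / (1 - w)).re = (1 - normSq w) / normSq (1 - w) := by
    simp only [div_re, add_re, add_im, sub_re, sub_im, one_re, one_im, normSq_apply]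
    ring
  have hnormSq : normSq w < 1 := by
    rw [normSq_eq_norm_sq]
    nlinarith [norm_nonneg w]
  rw [hre]
  exact div_pos (by linarith) (normSq_pos.2 (one_sub_ne_zero_of_norm_lt_one hw))

lemma Set.EqOn.of_eqOn_diff_singleton {X Y : Type*} [TopologicalSpace X] [TopologicalSpace Y]
    [T2Space Y] {s : Set X} {f g : X → Y} {a : X} [(𝓝[≠] a).NeBot] (hf : ContinuousAt f a)
    (hg : ContinuousAt g a) (h : Set.EqOn f g (s \ {a})) (hs : s ∈ 𝓝 a) : Set.EqOn f g s := by
  intro x hx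
  rcases eq_or_ne x a with rfl | hxa
  · refine ((hf.eventuallyEq_nhds_iff_eventuallyEq_nhdsNE hg).1 ?_).eq_of_nhds
    filter_upwards [inter_mem_nhdsWithin {x}ᶜ hs] with y hy using h ⟨hy.2, hy.1⟩
  · exact h ⟨hx, hxa⟩

lemma hasDerivAt_div_one_sub {z : ℂ} (hz : 1 - z ≠ 0) :
    HasDerivAt (fun w : ℂ => w / (1 - w)) ((1 - z) ^ 2)⁻¹ z := by
  refine ((hasDerivAt_id' z).fun_div ((hasDerivAt_id' z).const_sub 1) hz).congr_deriv ?_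
  ring

lemma hasDerivAt_div_one_sub_sq {z : ℂ} (hz : 1 - z ^ 2 ≠ 0) :
    HasDerivAt (fun w : ℂ => w / (1 - w ^ 2)) ((1 + z ^ 2) / (1 - z ^ 2) ^ 2) z := by
  refine ((hasDerivAt_id' z).fun_div ((hasDerivAt_pow 2 z).const_sub 1) hz).congr_deriv ?_
  ring

lemma isOddStarlike_div_one_sub_sq : IsOddStarlike fun z => z / (1 - z ^ 2) := by
  have hsq : ∀ z ∈ ball (0 : ℂ) 1, ‖z ^ 2‖ < 1 := fun z hz => by
    simpa using pow_lt_one₀ (norm_nonneg z) (mem_ball_zero_iff.1 hz) two_ne_zero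
  have hne : ∀ z ∈ ball (0 : ℂ) 1, 1 - z ^ 2 ≠ 0 := fun z hz =>
    one_sub_ne_zero_of_norm_lt_one (hsq z hz)
  refine ⟨fun z hz => analyticAt_id.div (analyticAt_const.sub (analyticAt_id.pow 2)) (hne z hz),
    by simp, by simp [(hasDerivAt_div_one_sub_sq (z := 0) (by simp)).deriv],
    fun z hz hz0 => ?_, fun z _ => by simp [neg_div]⟩
  have hquot : z * ((1 + z ^ 2) / (1 - z ^ 2) ^ 2) / (z / (1 - z ^ 2)) =
      (1 + z ^ 2) / (1 - z ^ 2) := by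
    field_simp [hne z hz]
  rw [(hasDerivAt_div_one_sub_sq (hne z hz)).deriv, hquot]
  exact re_one_add_div_one_sub_pos (hsq z hz)

lemma eqOn_deriv_of_mul_deriv_eq {f : ℂ → ℂ} (hf : AnalyticOnNhd ℂ f (ball 0 1))
    (hode : ∀ z ∈ ball (0:ℂ) 1, z * deriv f z = (z / (1 - z ^ 2)) * ((1 + z) / (1 - z))) :
    Set.EqOn (deriv f) (fun z => ((1 - z) ^ 2)⁻¹) (ball 0 1) := by
  have hcont : ContinuousAt (fun z : ℂ => ((1 - z) ^ 2)⁻¹) 0 :=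
    ((continuous_const.sub continuous_id).pow 2).continuousAt.inv₀ (by simp)
  refine Set.EqOn.of_eqOn_diff_singleton (hf.deriv 0 (mem_ball_self one_pos)).continuousAt hcont
    (fun z ⟨hz, hz0⟩ => ?_) (ball_mem_nhds 0 one_pos)
  have h1 := one_sub_ne_zero_of_norm_lt_one (mem_ball_zero_iff.1 hz)
  have h2 := one_sub_sq_ne_zero_of_norm_lt_one (mem_ball_zero_iff.1 hz)
  refine mul_left_cancel₀ hz0 ((hode z hz).trans ?_)
  field_simp
  ring

lemma exp_mul_deriv_eq_of_exp_comp_eventuallyEq {h F : ℂ → ℂ} {a F' : ℂ}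
    (hh : DifferentiableAt ℂ h a) (hF : HasDerivAt F F' a)
    (heq : (fun z => exp (h z)) =ᶠ[𝓝 a] F) : exp (h a) * deriv h a = F' :=
  hh.hasDerivAt.cexp.unique (hF.congr_of_eventuallyEq heq)

lemma eqOn_div_one_sub_of_eqOn_deriv {f : ℂ → ℂ} (hf : DifferentiableOn ℂ f (ball 0 1))
    (hf0 : f 0 = 0) (hderiv : Set.EqOn (deriv f) (fun z => ((1 - z) ^ 2)⁻¹) (ball 0 1)) :
    Set.EqOn f (fun z => z / (1 - z)) (ball 0 1) := by
  have hk : ∀ z ∈ ball (0 : ℂ) 1, HasDerivAt (fun w : ℂ => w / (1 - w)) ((1 - z) ^ 2)⁻¹ z :=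
    fun z hz => hasDerivAt_div_one_sub (one_sub_ne_zero_of_norm_lt_one (mem_ball_zero_iff.1 hz))
  exact isOpen_ball.eqOn_of_deriv_eq (convex_ball 0 1).isPreconnected hf
    (fun z hz => (hk z hz).differentiableAt.differentiableWithinAt)
    (fun z hz => (hderiv hz).trans (hk z hz).deriv.symm) (mem_ball_self one_pos) (by simp [hf0])

/-- Sharpness of `|γ₁| ≤ 1/2` on ℱ: the function `f` with `f 0 = 0` and
`z f'(z) = (z/(1-z²)) · ((1+z)/(1-z))` belongs to ℱ and satisfies `|γ₁| = 1/2`. -/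
theorem abs_gamma_one_sharp (f : ℂ → ℂ)
    (hf : AnalyticOnNhd ℂ f (ball (0:ℂ) 1)) (hf0 : f 0 = 0)
    (hode : ∀ z ∈ ball (0:ℂ) 1,
      z * deriv f z = (z / (1 - z ^ 2)) * ((1 + z) / (1 - z))) :
    MemClassF f ∧ ∀ h : ℂ → ℂ, IsLogBranch f h → ‖logCoeff h 1‖ = 1 / 2 := by
  have h0 : (0 : ℂ) ∈ ball (0 : ℂ) 1 := mem_ball_self one_pos
  have hderiv := eqOn_deriv_of_mul_deriv_eq hf hode
  have hf_eq := eqOn_div_one_sub_of_eqOn_deriv hf.differentiableOn hf0 hderiv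
  refine ⟨⟨hf, hf0, by simpa using hderiv h0, _, isOddStarlike_div_one_sub_sq, fun z hz hz0 => ?_⟩,
    fun h ⟨hh, hh0, hexp⟩ => ?_⟩
  · have hg : z / (1 - z ^ 2) ≠ 0 :=
      div_ne_zero hz0 (one_sub_sq_ne_zero_of_norm_lt_one (mem_ball_zero_iff.1 hz))
    rw [hode z hz, mul_div_cancel_left₀ _ hg]
    exact re_one_add_div_one_sub_pos (mem_ball_zero_iff.1 hz)
  · have hinv : HasDerivAt (fun z : ℂ => (1 - z)⁻¹) 1 0 :=
      (((hasDerivAt_id' 0).const_sub 1).inv (by simp)).congr_deriv (by simp)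
    have hexp_eq : Set.EqOn (fun z => exp (h z)) (fun z => (1 - z)⁻¹) (ball 0 1) := by
      refine Set.EqOn.of_eqOn_diff_singleton (hh 0 h0).continuousAt.cexp
        hinv.continuousAt (fun z ⟨hz, hz0⟩ => ?_) (ball_mem_nhds 0 one_pos)
      rw [hexp z hz hz0, hf_eq hz]
      exact div_div_cancel_left' hz0
    have hderiv_h : deriv h 0 = 1 := by
      simpa [hh0] using exp_mul_deriv_eq_of_exp_comp_eventuallyEq (hh 0 h0).differentiableAt
        hinv (hexp_eq.eventuallyEq_of_mem (ball_mem_nhds 0 one_pos))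
    simp [logCoeff, hderiv_h]
end

section
/- Define G(c, x) = 2c + 3(4 − c²)(1 − |x|²) + |c³/2 + c x(4 − c²) − (3/2) c x²(4 − c²)| for real c ∈ [0,2] and complex x with |x| ≤ 1. The maximum of G over this domain equals (4/81)(95 + 23√46), and it is attained at c = (8 − √46)/3, x = (11 − √46)/75; that is, G(c, x) ≤ (4/81)(95 + 23√46) for all c ∈ [0,2] and all x ∈ ℂ with |x| ≤ 1, with equality at that point. -/
/-!
Write `a = c³/2`, `b = c(4 - c²)`, `d = (3/2)c(4 - c²)` and `t = |x|`, so that the modulus term is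
`|a + bx - dx²|`, whose square is a concave quadratic in `Re x ∈ [-t, t]`. The triangle inequality
bounds `G` by a function of `(c, t)` that stays below `12.393 < (4/81)(95 + 23√46) ≈ 12.3947`
outside the box `0.3 < c < 0.65`, `t < 1/6`. Inside it, if the quadratic is still increasing at
`Re x = t`, the modulus is at most `a + bt - dt²`, and the maximum minus the resulting bound on `G`
is an explicit sum of squares vanishing at the extremal point. Otherwise dropping the `(Re x)²`
term and using `|Re x| ≤ t` leaves one-variable polynomial bounds below `12.393`.
-/

open Complex

section Quadratic

variable (a b d : ℝ) (x : ℂ)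

lemma norm_sq_quadratic :
    ‖(a : ℂ) + b * x - d * x ^ 2‖ ^ 2
      = (a + d * ‖x‖ ^ 2) ^ 2 + b ^ 2 * ‖x‖ ^ 2
        + 2 * b * x.re * (a - d * ‖x‖ ^ 2) - 4 * a * d * x.re ^ 2 := by
  rw [Complex.sq_norm, Complex.sq_norm, Complex.normSq_apply, Complex.normSq_apply]
  simp only [add_re, add_im, sub_re, sub_im, mul_re, mul_im, ofReal_re, ofReal_im, pow_two]
  ring

variable {a b d}

lemma norm_quadratic_le (ha : 0 ≤ a) (hb : 0 ≤ b) (hd : 0 ≤ d) :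
    ‖(a : ℂ) + b * x - d * x ^ 2‖ ≤ a + b * ‖x‖ + d * ‖x‖ ^ 2 := by
  calc ‖(a : ℂ) + b * x - d * x ^ 2‖ ≤ ‖(a : ℂ)‖ + ‖(b : ℂ) * x‖ + ‖(d : ℂ) * x ^ 2‖ :=
        (norm_sub_le _ _).trans (add_le_add_left (norm_add_le _ _) _)
    _ = a + b * ‖x‖ + d * ‖x‖ ^ 2 := by
        simp only [norm_mul, norm_pow, norm_real, Real.norm_of_nonneg, ha, hb, hd]

lemma norm_quadratic_sq_le (ha : 0 ≤ a) (hb : 0 ≤ b) (hd : 0 ≤ d) :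
    ‖(a : ℂ) + b * x - d * x ^ 2‖ ^ 2
      ≤ (|a - d * ‖x‖ ^ 2| + b * ‖x‖) ^ 2 + 4 * a * d * ‖x‖ ^ 2 := by
  have hre : x.re * (a - d * ‖x‖ ^ 2) ≤ ‖x‖ * |a - d * ‖x‖ ^ 2| :=
    (le_abs_self _).trans (by rw [abs_mul]; gcongr; exact abs_re_le_norm x)
  rw [norm_sq_quadratic, add_sq (|_|), sq_abs]
  nlinarith [mul_nonneg (mul_nonneg ha hd) (sq_nonneg x.re), mul_le_mul_of_nonneg_left hre hb]

lemma norm_quadratic_le_of_phase (ha : 0 ≤ a) (hb : 0 < b) (hd : 0 ≤ d)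
    (h : 4 * a * d * ‖x‖ ≤ b * (a - d * ‖x‖ ^ 2)) :
    ‖(a : ℂ) + b * x - d * x ^ 2‖ ≤ a + b * ‖x‖ - d * ‖x‖ ^ 2 := by
  -- `h` says that the square of the left side, a concave quadratic in `x.re`, is still
  -- nondecreasing at `x.re = ‖x‖`, so it is largest there
  have hx := norm_nonneg x
  have hgap : 0 ≤ a - d * ‖x‖ ^ 2 :=
    nonneg_of_mul_nonneg_right (h.trans' (by positivity)) hb
  refine (pow_le_pow_iff_left₀ (norm_nonneg _) (by nlinarith) two_ne_zero).mp ?_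
  rw [norm_sq_quadratic]
  nlinarith [mul_nonneg (sub_nonneg.mpr (re_le_norm x)) (sub_nonneg.mpr h),
    mul_nonneg (mul_nonneg ha hd) (sq_nonneg (‖x‖ - x.re))]

end Quadratic

noncomputable def G (c : ℝ) (x : ℂ) : ℝ :=
  2 * c + 3 * (4 - c ^ 2) * (1 - ‖x‖ ^ 2)
    + ‖(c : ℂ) ^ 3 / 2 + (c : ℂ) * x * (4 - (c : ℂ) ^ 2)
        - 3 / 2 * (c : ℂ) * x ^ 2 * (4 - (c : ℂ) ^ 2)‖

lemma G_eq (c : ℝ) (x : ℂ) :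
    G c x = 2 * c + 3 * (4 - c ^ 2) * (1 - ‖x‖ ^ 2)
      + ‖((c ^ 3 / 2 : ℝ) : ℂ) + (c * (4 - c ^ 2) : ℝ) * x
          - (3 / 2 * c * (4 - c ^ 2) : ℝ) * x ^ 2‖ := by
  unfold G; push_cast; ring_nf

lemma G_ofReal (c s : ℝ) :
    G c s = 2 * c + 3 * (4 - c ^ 2) * (1 - s ^ 2)
      + |c ^ 3 / 2 + c * s * (4 - c ^ 2) - 3 / 2 * c * s ^ 2 * (4 - c ^ 2)| := by
  rw [G, ← Real.norm_eq_abs, ← norm_real, norm_real s, Real.norm_eq_abs, sq_abs]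
  push_cast
  rfl

lemma G_max_value_gt : (12.393 : ℝ) < 4 / 81 * (95 + 23 * √46) := by
  have : (6.782 : ℝ) < √46 := Real.lt_sqrt_of_sq_lt (by norm_num)
  linarith

lemma G_le_of_triangle (x : ℂ) {c : ℝ} (hc0 : 0 ≤ c) (hc2 : c ≤ 2)
    (h : 1 / 6 ≤ ‖x‖ ∨ c ≤ 0.3 ∨ 0.65 ≤ c) :
    G c x ≤ 4 / 81 * (95 + 23 * √46) := by
  have hS : 0 ≤ 4 - c ^ 2 := by nlinarith
  have hw := norm_quadratic_le x (by positivity : 0 ≤ c ^ 3 / 2)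
    (by positivity : 0 ≤ c * (4 - c ^ 2)) (by positivity : 0 ≤ 3 / 2 * c * (4 - c ^ 2))
  rw [G_eq]
  generalize ‖((c ^ 3 / 2 : ℝ) : ℂ) + (c * (4 - c ^ 2) : ℝ) * x
      - (3 / 2 * c * (4 - c ^ 2) : ℝ) * x ^ 2‖ = w at hw ⊢
  generalize ‖x‖ = t at *
  have hψ : 2 * c + 3 * (4 - c ^ 2) * (1 - t ^ 2) + (c ^ 3 / 2 + c * (4 - c ^ 2) * t
      + 3 / 2 * c * (4 - c ^ 2) * t ^ 2) ≤ 12 + 2 * c - 8 / 3 * c ^ 2 + 2 / 3 * c ^ 3 := by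
    nlinarith [mul_nonneg (by linarith : (0:ℝ) ≤ 2 + c) (sq_nonneg ((6 - 3 * c) * t - c))]
  have hψ_le : c ≤ 0.3 ∨ 0.65 ≤ c → 12 + 2 * c - 8 / 3 * c ^ 2 + 2 / 3 * c ^ 3 ≤ 12.393
    | .inl hc => by
      nlinarith [mul_nonneg hc0 (by linarith : (0:ℝ) ≤ 0.3 - c),
        mul_nonneg (mul_nonneg hc0 hc0) (by linarith : (0:ℝ) ≤ 0.3 - c)]
    | .inr hc => by
      nlinarith [mul_nonneg (mul_nonneg (by linarith : (0:ℝ) ≤ c - 0.65)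
        (by linarith : (0:ℝ) ≤ 2 - c)) (by linarith : (0:ℝ) ≤ c + 1),
        mul_nonneg (by linarith : (0:ℝ) ≤ c - 0.65) (by linarith : (0:ℝ) ≤ 2 - c)]
  suffices 2 * c + 3 * (4 - c ^ 2) * (1 - t ^ 2) + (c ^ 3 / 2 + c * (4 - c ^ 2) * t
      + 3 / 2 * c * (4 - c ^ 2) * t ^ 2) ≤ 12.393 by linarith [G_max_value_gt]
  rcases h with ht | hc
  · rcases le_or_gt c (2 / 3) with hc | hc
    · have hχ : 35 / 3 + 17 / 6 * c - 35 / 12 * c ^ 2 + 7 / 24 * c ^ 3 ≤ 12.393 := by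
        nlinarith [mul_nonneg (sq_nonneg (c - 53 / 100)) hc0,
          mul_nonneg (sq_nonneg (c - 53 / 100)) (by linarith : (0:ℝ) ≤ 2 / 3 - c),
          mul_nonneg hc0 (by linarith : (0:ℝ) ≤ 2 / 3 - c)]
      nlinarith [mul_nonneg (mul_nonneg hS (by linarith : (0:ℝ) ≤ t - 1 / 6))
        (by nlinarith : (0:ℝ) ≤ (3 - 3 / 2 * c) * (t + 1 / 6) - c)]
    · exact hψ.trans (hψ_le (.inr (by linarith)))
  · exact hψ.trans (hψ_le hc)

lemma G_le_of_phase (x : ℂ) {c : ℝ} (hc0 : 0 < c) (hc2 : c < 2)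
    (h : 6 * c ^ 2 * ‖x‖ ≤ c ^ 2 - 3 * (4 - c ^ 2) * ‖x‖ ^ 2) :
    G c x ≤ 4 / 81 * (95 + 23 * √46) := by
  have hS : 0 < 4 - c ^ 2 := by nlinarith
  have hphase : 4 * (c ^ 3 / 2) * (3 / 2 * c * (4 - c ^ 2)) * ‖x‖
      ≤ c * (4 - c ^ 2) * (c ^ 3 / 2 - 3 / 2 * c * (4 - c ^ 2) * ‖x‖ ^ 2) := by
    nlinarith [mul_le_mul_of_nonneg_left h (by positivity : 0 ≤ c ^ 2 * (4 - c ^ 2))]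
  have hw := norm_quadratic_le_of_phase x (by positivity) (by positivity) (by positivity) hphase
  have hr : √46 ^ 2 = 46 := Real.sq_sqrt (by norm_num)
  have hr0 : 0 ≤ √46 := Real.sqrt_nonneg 46
  rw [G_eq]
  generalize ‖((c ^ 3 / 2 : ℝ) : ℂ) + (c * (4 - c ^ 2) : ℝ) * x
      - (3 / 2 * c * (4 - c ^ 2) : ℝ) * x ^ 2‖ = w at hw ⊢
  generalize ‖x‖ = t at *
  generalize √46 = r at *
  have hsos : 4 / 81 * (95 + 23 * r) - (2 * c + 3 * (4 - c ^ 2) * (1 - t ^ 2)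
        + (c ^ 3 / 2 + c * (4 - c ^ 2) * t - 3 / 2 * c * (4 - c ^ 2) * t ^ 2))
      = (3 * c - 8 + r) ^ 2 * (8 + 2 * r - 3 * c) / 81
        + (2 - c) * ((6 + 3 * c) * t - c) ^ 2 / 6 := by
    linear_combination (24 - 9 * c - 2 * r) / 81 * hr
  have h₁ := mul_nonneg (sq_nonneg (3 * c - 8 + r)) (by linarith : (0:ℝ) ≤ 8 + 2 * r - 3 * c)
  have h₂ := mul_nonneg (by linarith : (0:ℝ) ≤ 2 - c) (sq_nonneg ((6 + 3 * c) * t - c))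
  linarith

lemma G_le_of_sq_term_le (x : ℂ) {c : ℝ} (hc0 : 0.3 ≤ c) (hc1 : c ≤ 0.65)
    (hphase : c ^ 2 - 3 * (4 - c ^ 2) * ‖x‖ ^ 2 < 6 * c ^ 2 * ‖x‖)
    (hgap : 3 * (4 - c ^ 2) * ‖x‖ ^ 2 ≤ c ^ 2) :
    G c x ≤ 4 / 81 * (95 + 23 * √46) := by
  have hS : 0 < 4 - c ^ 2 := by nlinarith
  have hw := norm_quadratic_sq_le x (by positivity : 0 ≤ c ^ 3 / 2)
    (by positivity : 0 ≤ c * (4 - c ^ 2)) (by positivity : 0 ≤ 3 / 2 * c * (4 - c ^ 2))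
  rw [abs_of_nonneg (by nlinarith)] at hw
  rw [G_eq]
  generalize ‖((c ^ 3 / 2 : ℝ) : ℂ) + (c * (4 - c ^ 2) : ℝ) * x
      - (3 / 2 * c * (4 - c ^ 2) : ℝ) * x ^ 2‖ = w at hw ⊢
  have ht : 0 ≤ ‖x‖ := norm_nonneg x
  generalize ‖x‖ = t at *
  have hdisc : c ^ 2 * (c ^ 4 + 28 * c ^ 2 + 16)
      ≤ 12 * (4 - c ^ 2) * (0.393 - 2 * c + 3 * c ^ 2) := by
    nlinarith [mul_nonneg (by linarith : (0:ℝ) ≤ c - 0.3) (by linarith : (0:ℝ) ≤ 0.65 - c),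
      sq_nonneg (c - 0.41),
      mul_nonneg (mul_nonneg (by linarith : (0:ℝ) ≤ c - 0.3) (by linarith : (0:ℝ) ≤ 0.65 - c))
        (sq_nonneg c),
      mul_nonneg (mul_nonneg (by linarith : (0:ℝ) ≤ c - 0.3) (by linarith : (0:ℝ) ≤ 0.65 - c))
        (sq_nonneg (c - 1))]
  have hsq : w ^ 2 ≤ (0.393 - 2 * c + 3 * c ^ 2 + 3 * (4 - c ^ 2) * t ^ 2) ^ 2 := calc
    w ^ 2 ≤ (c * t * (2 * c ^ 2 + 4)) ^ 2 + 3 * c ^ 4 * (4 - c ^ 2) * t ^ 2 := by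
      have h₀ : 0 ≤ c ^ 3 / 2 - 3 / 2 * c * (4 - c ^ 2) * t ^ 2 + c * (4 - c ^ 2) * t := by
        nlinarith
      have h₁ : c ^ 3 / 2 - 3 / 2 * c * (4 - c ^ 2) * t ^ 2 + c * (4 - c ^ 2) * t
          ≤ c * t * (2 * c ^ 2 + 4) := by nlinarith
      nlinarith [pow_le_pow_left₀ h₀ h₁ 2]
    _ = t ^ 2 * (c ^ 2 * (c ^ 4 + 28 * c ^ 2 + 16)) := by ring
    _ ≤ t ^ 2 * (12 * (4 - c ^ 2) * (0.393 - 2 * c + 3 * c ^ 2)) := by gcongr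
    -- AM-GM: `(K + 3(4 - c²)t²)² ≥ 4 · K · 3(4 - c²)t²`
    _ ≤ _ := by nlinarith [sq_nonneg (0.393 - 2 * c + 3 * c ^ 2 - 3 * (4 - c ^ 2) * t ^ 2)]
  have := abs_le_of_sq_le_sq' hsq (by nlinarith)
  linarith [G_max_value_gt]

lemma G_le_of_lt_sq_term (x : ℂ) {c : ℝ} (hc0 : 0 ≤ c) (ht : ‖x‖ ≤ 1 / 6)
    (hgap : c ^ 2 < 3 * (4 - c ^ 2) * ‖x‖ ^ 2) :
    G c x ≤ 4 / 81 * (95 + 23 * √46) := by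
  have hS : 0 < 4 - c ^ 2 := by nlinarith
  have hw := norm_quadratic_sq_le x (by positivity : 0 ≤ c ^ 3 / 2)
    (by positivity : 0 ≤ c * (4 - c ^ 2)) (by positivity : 0 ≤ 3 / 2 * c * (4 - c ^ 2))
  rw [abs_of_nonpos (by nlinarith), neg_sub] at hw
  rw [G_eq]
  generalize ‖((c ^ 3 / 2 : ℝ) : ℂ) + (c * (4 - c ^ 2) : ℝ) * x
      - (3 / 2 * c * (4 - c ^ 2) : ℝ) * x ^ 2‖ = w at hw ⊢
  have ht0 : 0 ≤ ‖x‖ := norm_nonneg x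
  generalize ‖x‖ = t at *
  have hdt : 0 ≤ 3 / 2 * c * (4 - c ^ 2) * t ^ 2 - c ^ 3 / 2 := by nlinarith
  -- `4ad t² = 3c³t · bt ≤ 3c³t · (dt² - a + bt)` completes the square
  have hsq : w ^ 2 ≤ (3 / 2 * c * (4 - c ^ 2) * t ^ 2 - c ^ 3 / 2 + c * (4 - c ^ 2) * t
      + 3 / 2 * c ^ 3 * t) ^ 2 := by
    nlinarith [mul_nonneg (by positivity : 0 ≤ 3 * c ^ 3 * t) hdt, sq_nonneg (c ^ 3 * t)]
  have := abs_le_of_sq_le_sq' hsq (by positivity)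
  have hcubic : 12 + 2 * c - 8 / 3 * c ^ 2 - 1 / 12 * c ^ 3 ≤ 12.393 := by
    nlinarith [sq_nonneg (c - 0.37), mul_nonneg (sq_nonneg (c - 0.37)) hc0]
  nlinarith [G_max_value_gt,
    mul_nonneg (by linarith : (0:ℝ) ≤ 2 + c) (sq_nonneg ((6 - 3 * c) * t - c)),
    mul_nonneg (pow_nonneg hc0 3) (by linarith : (0:ℝ) ≤ 1 / 6 - t)]

theorem G_le (x : ℂ) {c : ℝ} (hc : c ∈ Set.Icc (0 : ℝ) 2) :
    G c x ≤ 4 / 81 * (95 + 23 * √46) := by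
  obtain ⟨hc0, hc2⟩ := hc
  by_cases htri : 1 / 6 ≤ ‖x‖ ∨ c ≤ 0.3 ∨ 0.65 ≤ c
  · exact G_le_of_triangle x hc0 hc2 htri
  simp only [not_or, not_le] at htri
  obtain ⟨ht, hc3, hc65⟩ := htri
  by_cases hphase : 6 * c ^ 2 * ‖x‖ ≤ c ^ 2 - 3 * (4 - c ^ 2) * ‖x‖ ^ 2
  · exact G_le_of_phase x (by linarith) (by linarith) hphase
  by_cases hgap : 3 * (4 - c ^ 2) * ‖x‖ ^ 2 ≤ c ^ 2
  · exact G_le_of_sq_term_le x hc3.le hc65.le (not_le.mp hphase) hgap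
  · exact G_le_of_lt_sq_term x hc0 ht.le (not_le.mp hgap)

lemma G_extremal :
    G ((8 - √46) / 3) ((11 - √46) / 75 : ℝ) = 4 / 81 * (95 + 23 * √46) := by
  have hr : √46 ^ 2 = 46 := Real.sq_sqrt (by norm_num)
  have hr' : √46 < 6.8 := (Real.sqrt_lt' (by norm_num)).2 (by norm_num)
  rw [G_ofReal]
  generalize √46 = r at *
  have hval : ((8 - r) / 3) ^ 3 / 2 + (8 - r) / 3 * ((11 - r) / 75) * (4 - ((8 - r) / 3) ^ 2)
      - 3 / 2 * ((8 - r) / 3) * ((11 - r) / 75) ^ 2 * (4 - ((8 - r) / 3) ^ 2)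
      = 45224 / 2025 - 6634 / 2025 * r := by
    linear_combination (-(1 / 101250) * r ^ 3 - (2 / 50625) * r ^ 2 - (488 / 50625) * r
      + 15188 / 50625) * hr
  rw [hval, abs_of_nonneg (by linarith)]
  linear_combination ((1 / 16875) * r ^ 2 - (38 / 16875) * r - 5078 / 16875) * hr

/-- `G(c,x) = 2c + 3(4 − c²)(1 − |x|²) + |c³/2 + cx(4 − c²) − (3/2)cx²(4 − c²)|`
attains its maximum `(4/81)(95 + 23√46)` over `{(c,x) : c ∈ [0,2], |x| ≤ 1}` at
`c = (8 − √46)/3`, `x = (11 − √46)/75`. -/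
theorem G_max :
    (∀ (c : ℝ) (x : ℂ), c ∈ Set.Icc (0:ℝ) 2 → ‖x‖ ≤ 1 →
      2 * c + 3 * (4 - c ^ 2) * (1 - (‖x‖) ^ 2)
        + ‖(c : ℂ) ^ 3 / 2 + (c : ℂ) * x * (4 - (c : ℂ) ^ 2)
            - 3 / 2 * (c : ℂ) * x ^ 2 * (4 - (c : ℂ) ^ 2)‖
      ≤ 4 / 81 * (95 + 23 * Real.sqrt 46)) ∧
    ((8 - Real.sqrt 46) / 3) ∈ Set.Icc (0:ℝ) 2 ∧
    ‖(((11 - Real.sqrt 46) / 75 : ℝ) : ℂ)‖ ≤ 1 ∧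
    (2 * ((8 - Real.sqrt 46) / 3)
      + 3 * (4 - ((8 - Real.sqrt 46) / 3) ^ 2)
        * (1 - (‖(((11 - Real.sqrt 46) / 75 : ℝ) : ℂ)‖) ^ 2)
      + ‖(((8 - Real.sqrt 46) / 3 : ℝ) : ℂ) ^ 3 / 2
          + (((8 - Real.sqrt 46) / 3 : ℝ) : ℂ) * (((11 - Real.sqrt 46) / 75 : ℝ) : ℂ)
            * (4 - (((8 - Real.sqrt 46) / 3 : ℝ) : ℂ) ^ 2)
          - 3 / 2 * (((8 - Real.sqrt 46) / 3 : ℝ) : ℂ)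
            * (((11 - Real.sqrt 46) / 75 : ℝ) : ℂ) ^ 2
            * (4 - (((8 - Real.sqrt 46) / 3 : ℝ) : ℂ) ^ 2)‖
      = 4 / 81 * (95 + 23 * Real.sqrt 46)) := by
  have h6 : (6 : ℝ) < √46 := Real.lt_sqrt_of_sq_lt (by norm_num)
  have h7 : √46 < 7 := (Real.sqrt_lt' (by norm_num)).2 (by norm_num)
  refine ⟨fun c x hc _ ↦ G_le x hc, ⟨by linarith, by linarith⟩, ?_, G_extremal⟩
  rw [norm_real, Real.norm_of_nonneg (by linarith)]
  linarith
end
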